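/- arXiv:1904.06571 — 5 statements merged into one kernel-verified Lean document; each statement's English description precedes it below -/
import Mathlib

section
/- If S is a subset of the free quandle FQ(X) which is independent in the free group F(X) (i.e., S freely generates a free subgroup), then the subquandle of FQ(X) generated by S is a free quandle on S. -/
open FreeGroup

/-- The free quandle on `X`, realized as the union of the conjugacy classes of the
generators inside the free group `F(X)`. -/
def FQ (X : Type*) : Set (FreeGroup X) :=
  {g | ∃ (x : X) (w : FreeGroup X), g = w⁻¹ * FreeGroup.of x * w}

/-- A subset of a group that is a subquandle of `Conj G`, i.e. closed under both
conjugation operations `a ▷ b = b⁻¹ a b` and `a ◁ b = b a b⁻¹`. -/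
def IsSubquandle {G : Type*} [Group G] (Q : Set G) : Prop :=
  ∀ a ∈ Q, ∀ b ∈ Q, b⁻¹ * a * b ∈ Q ∧ b * a * b⁻¹ ∈ Q

/-- Membership in the subquandle of `Conj G` generated by a set `S`. -/
inductive SubquandleClosure {G : Type*} [Group G] (S : Set G) : G → Prop
  | base {a : G} : a ∈ S → SubquandleClosure S a
  | conj {a b : G} : SubquandleClosure S a → SubquandleClosure S b →
      SubquandleClosure S (b⁻¹ * a * b)
  | conjInv {a b : G} : SubquandleClosure S a → SubquandleClosure S b →
      SubquandleClosure S (b * a * b⁻¹)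

/-- A subset of a group is independent if it freely generates a free subgroup,
i.e. the induced homomorphism from the free group on `S` is injective. -/
def Independent {G : Type*} [Group G] (S : Set G) : Prop :=
  Function.Injective (FreeGroup.lift (Subtype.val : S → G))

/-- A subset `Q` of a group, closed under conjugation, is a free quandle with basis
`S ⊆ Q` if it satisfies the universal property of free quandles: every map from `S`
to a quandle extends uniquely to a quandle morphism on `Q`. -/
def IsFreeQuandleOn {G : Type*} [Group G] (Q S : Set G) : Prop :=
  ∃ hSQ : S ⊆ Q,
    ∀ (Q' : Type) [Quandle Q'] (f : S → Q'),
      ∃! h : Q → Q',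
        (∀ s : S, h ⟨s.1, hSQ s.2⟩ = f s) ∧
        ∀ (a b : Q) (hm : (a : G) * (b : G) * (a : G)⁻¹ ∈ Q),
          h ⟨(a : G) * (b : G) * (a : G)⁻¹, hm⟩ = Shelf.act (h a) (h b)

/-- `w` has no first letter equal to `x` or `x⁻¹`. -/
def FirstLetterNe {X : Type*} [DecidableEq X] (w : FreeGroup X) (x : X) : Prop :=
  w.toWord.head?.map Prod.fst ≠ some x

/-- `P x`: reduced words `w` with `x^w ∈ Q` which are trivial or do not start
with `x^{±1}`. -/
def Px {X : Type*} [DecidableEq X] (Q : Set (FreeGroup X)) (x : X) : Set (FreeGroup X) :=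
  {w | w⁻¹ * FreeGroup.of x * w ∈ Q ∧ (w = 1 ∨ FirstLetterNe w x)}

/-- `T x`: the "non-shrinkable" elements of `P x`. -/
def Tx {X : Type*} [DecidableEq X] (Q : Set (FreeGroup X)) (x : X) : Set (FreeGroup X) :=
  {w ∈ Px Q x | ∀ q ∈ Q, ∀ ε ∈ ({1, -1} : Set ℤ), (w * q ^ ε).norm > w.norm}

/-- The candidate basis `S(Q) = ⋃ₓ x^{Tₓ}`. -/
def SQbasis {X : Type*} [DecidableEq X] (Q : Set (FreeGroup X)) : Set (FreeGroup X) :=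
  ⋃ x : X, {g | ∃ w ∈ Tx Q x, g = w⁻¹ * FreeGroup.of x * w}

/-- In the product of the reduced words `w` and `v`, exactly `k` letters cancel from
the end of `w` against `k` letters from the beginning of `v`. -/
def CancelBound {X : Type*} [DecidableEq X] (w v : FreeGroup X) (k : ℕ) : Prop :=
  (w * v).toWord = w.toWord.take (w.toWord.length - k) ++ v.toWord.drop k

open Quandles

/-!
Write `ι : F(S) → F(X)` for the map induced by the inclusion. The subquandle generated by `S`
is `ι(FQ(S))`, and `ι` is injective, so a map `f : S → Q'` only has to be extended from
`FQ(S) ⊆ F(S)`. Let `ρ : F(S) → Sym(Q')` send `s` to the inner automorphism `f s ◃ -`, and send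
`w⁻¹ s w` to `ρ(w)⁻¹ (f s)`. This is well defined because `w⁻¹ s w = v⁻¹ s' v` forces `s = s'`
and `v w⁻¹ ∈ ⟨s⟩` (the centralizer of a basis element of a free group is cyclic), while
`ρ(s)` fixes `f s` by the quandle axiom. It is a quandle map because `ρ` intertwines
conjugation in `F(S)` with the action of `Q'` on itself, and it is unique because the
subquandle is generated by `S` and left actions in a rack are injective.
-/

namespace FreeGroup

variable {α : Type*}

theorem eq_of_conj_of_eq_conj_of {x y : α} {v w : FreeGroup α}
    (h : w⁻¹ * of x * w = v⁻¹ * of y * v) : x = y := by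
  have hab : ∀ (u : FreeGroup α) (z : α),
      Abelianization.of (u⁻¹ * of z * u) = Abelianization.of (of z) := by
    intro u z
    rw [_root_.map_mul, _root_.map_mul, _root_.map_inv, mul_comm _ (Abelianization.of (of z)),
      inv_mul_cancel_right]
  -- `FreeAbelianGroup α` is by definition `Additive (Abelianization (FreeGroup α))`.
  exact FreeAbelianGroup.of_injective (by
    change Additive.ofMul (Abelianization.of (of x)) = Additive.ofMul (Abelianization.of (of y))
    rw [← hab w, ← hab v, h])

theorem isReduced_cons_cons_of_ne {a b : α × Bool} {L : List (α × Bool)} (hab : a.1 ≠ b.1)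
    (h : IsReduced (b :: L)) : IsReduced (a :: b :: L) :=
  List.isChain_cons_cons.2 ⟨fun h' => absurd h' hab, h⟩

theorem mem_zpowers_of_commute_of {x : α} {c : FreeGroup α} (hc : Commute c (of x)) :
    c ∈ Subgroup.zpowers (of x) := by
  classical
  induction hn : c.toWord.length using Nat.strong_induction_on generalizing c with
  | _ n ih =>
  rcases hw : c.toWord with _ | ⟨⟨y, b⟩, L⟩
  · rw [toWord_eq_nil_iff.1 hw]
    exact one_mem _
  have hL : (mk L).toWord = L := by
    rw [toWord_mk]
    exact (isReduced_toWord.infix (hw ▸ List.suffix_cons _ _).isInfix).reduce_eq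
  have hsplit : c = mk [(y, b)] * mk L := by rw [mul_mk, List.singleton_append, ← hw, mk_toWord]
  by_cases hyx : y = x
  · subst hyx
    have hletter : mk [(y, b)] ∈ Subgroup.zpowers (of y) := by
      cases b
      · exact Subgroup.inv_mem _ (Subgroup.mem_zpowers _)
      · exact Subgroup.mem_zpowers _
    obtain ⟨k, hk⟩ := Subgroup.mem_zpowers_iff.1 hletter
    have hLc : Commute (mk L) (of y) := by
      have := ((Commute.refl (of y)).zpow_left k).inv_left.mul_left hc
      rwa [hk, hsplit, inv_mul_cancel_left] at this
    rw [hsplit]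
    exact Subgroup.mul_mem _ hletter (ih _ (by rw [← hn, hw, hL]; simp) hLc rfl)
  · exfalso
    have hxc : (of x * c).toWord = (x, true) :: c.toWord := by
      rw [toWord_mul, toWord_of, List.singleton_append, hw]
      exact (isReduced_cons_cons_of_ne (a := (x, true)) (Ne.symm hyx)
        (hw ▸ isReduced_toWord)).reduce_eq
    have hsub := toWord_mul_sublist c (of x)
    rw [hc.eq, hxc, toWord_of] at hsub
    have := hsub.eq_of_length (by simp)
    rw [hw] at this
    exact hyx (congrArg Prod.fst (List.cons.inj this).1).symm

end FreeGroup

section InnerAction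

variable {Y R : Type*}

def innerAction [Rack R] (f : Y → R) : FreeGroup Y →* Equiv.Perm R :=
  FreeGroup.lift fun y => Rack.act' (f y)

theorem innerAction_of [Rack R] (f : Y → R) (y : Y) : innerAction f (of y) = Rack.act' (f y) :=
  lift_apply_of

theorem act'_innerAction_apply [Rack R] (f : Y → R) (u : FreeGroup Y) (q : R) :
    Rack.act' (innerAction f u q) = innerAction f u * Rack.act' q * (innerAction f u)⁻¹ := by
  induction u generalizing q with
  | C1 => simp
  | of y => exact Rack.ad_conj (f y) q
  | inv_of y ih =>
    have := ih ((innerAction f (of y))⁻¹ q)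
    rw [← Equiv.Perm.mul_apply, mul_inv_cancel, Equiv.Perm.one_apply] at this
    rw [_root_.map_inv, inv_inv, this]
    group
  | mul u v ihu ihv =>
    rw [_root_.map_mul, Equiv.Perm.mul_apply, ihu, ihv]
    group

theorem innerAction_conj_of [Rack R] (f : Y → R) (u : FreeGroup Y) (y : Y) :
    innerAction f (u⁻¹ * of y * u) = Rack.act' ((innerAction f u)⁻¹ (f y)) := by
  rw [← _root_.map_inv, act'_innerAction_apply, _root_.map_mul, _root_.map_mul, _root_.map_inv,
    inv_inv, innerAction_of]

theorem innerAction_inv_apply_of_conj [Rack R] (f : Y → R) (u v : FreeGroup Y) (y z : Y) :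
    (innerAction f (v * (u⁻¹ * of y * u)⁻¹))⁻¹ (f z) =
      (innerAction f u)⁻¹ (f y) ◃ (innerAction f v)⁻¹ (f z) := by
  rw [← _root_.map_inv, mul_inv_rev, inv_inv, _root_.map_mul, innerAction_conj_of,
    Equiv.Perm.mul_apply, _root_.map_inv, Rack.act'_apply]

theorem innerAction_inv_apply_eq_of_conj_eq [Quandle R] (f : Y → R) {y z : Y}
    {v w : FreeGroup Y} (h : w⁻¹ * of y * w = v⁻¹ * of z * v) :
    (innerAction f w)⁻¹ (f y) = (innerAction f v)⁻¹ (f z) := by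
  obtain rfl := FreeGroup.eq_of_conj_of_eq_conj_of h
  have hcomm : Commute (v * w⁻¹) (of y) :=
    calc v * w⁻¹ * of y = v * (w⁻¹ * of y * w) * w⁻¹ := by group
      _ = v * (v⁻¹ * of y * v) * w⁻¹ := by rw [h]
      _ = of y * (v * w⁻¹) := by group
  obtain ⟨n, hn⟩ := Subgroup.mem_zpowers_iff.1 (FreeGroup.mem_zpowers_of_commute_of hcomm)
  have hfix : innerAction f (v * w⁻¹) (f y) = f y := by
    rw [← hn, map_zpow, innerAction_of]
    exact Equiv.Perm.zpow_apply_eq_self_of_apply_eq_self (Quandle.fix (x := f y)) n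
  rw [show v = v * w⁻¹ * w by group, _root_.map_mul, mul_inv_rev, Equiv.Perm.mul_apply,
    Equiv.Perm.inv_eq_iff_eq.2 hfix.symm]

end InnerAction

section Closure

variable {G : Type*} [Group G] (S : Set G)

local notation "ι" => FreeGroup.lift (Subtype.val : S → G)

theorem SubquandleClosure.conj_lift {g : G} (hg : SubquandleClosure S g) (u : FreeGroup S) :
    SubquandleClosure S ((ι u)⁻¹ * g * ι u) := by
  induction u generalizing g with
  | C1 => simpa using hg
  | of s => simpa using hg.conj (.base s.2)
  | inv_of s _ => simpa using hg.conjInv (.base s.2)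
  | mul u v ihu ihv => simpa [mul_assoc] using ihv (ihu hg)

theorem subquandleClosure_iff {g : G} :
    SubquandleClosure S g ↔ ∃ (s : S) (w : FreeGroup S), g = ι (w⁻¹ * of s * w) := by
  refine ⟨fun hg => ?_, ?_⟩
  · induction hg with
    | base ha => exact ⟨⟨_, ha⟩, 1, by simp⟩
    | conj _ _ iha ihb =>
      obtain ⟨s, u, rfl⟩ := iha
      obtain ⟨t, v, rfl⟩ := ihb
      exact ⟨s, u * (v⁻¹ * of t * v), by simp only [_root_.map_mul, _root_.map_inv]; group⟩
    | conjInv _ _ iha ihb =>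
      obtain ⟨s, u, rfl⟩ := iha
      obtain ⟨t, v, rfl⟩ := ihb
      exact ⟨s, u * (v⁻¹ * of t * v)⁻¹, by simp only [_root_.map_mul, _root_.map_inv]; group⟩
  · rintro ⟨s, w, rfl⟩
    simpa using (SubquandleClosure.base s.2).conj_lift S w

theorem SubquandleClosure.hom_ext {R : Type*} [Rack R]
    {h₁ h₂ : {g : G | SubquandleClosure S g} → R}
    (hS : ∀ (s : G) (hs : s ∈ S), h₁ ⟨s, .base hs⟩ = h₂ ⟨s, .base hs⟩)
    (h₁_act : ∀ (a b : {g : G | SubquandleClosure S g}) (hm : (a : G) * b * (a : G)⁻¹ ∈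
      {g : G | SubquandleClosure S g}), h₁ ⟨a * b * (a : G)⁻¹, hm⟩ = h₁ a ◃ h₁ b)
    (h₂_act : ∀ (a b : {g : G | SubquandleClosure S g}) (hm : (a : G) * b * (a : G)⁻¹ ∈
      {g : G | SubquandleClosure S g}), h₂ ⟨a * b * (a : G)⁻¹, hm⟩ = h₂ a ◃ h₂ b) :
    h₁ = h₂ := by
  funext ⟨g, hg⟩
  induction hg with
  | base ha => exact hS _ ha
  | @conj a b ha hb iha ihb =>
    have hm : b * (b⁻¹ * a * b) * b⁻¹ ∈ {g : G | SubquandleClosure S g} := by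
      show SubquandleClosure S _
      rwa [show b * (b⁻¹ * a * b) * b⁻¹ = a by group]
    have e₁ := h₁_act ⟨b, hb⟩ ⟨_, ha.conj hb⟩ hm
    have e₂ := h₂_act ⟨b, hb⟩ ⟨_, ha.conj hb⟩ hm
    rw [show (⟨_, hm⟩ : {g : G | SubquandleClosure S g}) = ⟨a, ha⟩ from
      Subtype.ext (by group)] at e₁ e₂
    refine (Rack.left_cancel (h₁ ⟨b, hb⟩)).1 ?_
    rw [← e₁, iha, e₂, ihb]
  | conjInv ha hb iha ihb =>
    rw [h₁_act ⟨_, hb⟩ ⟨_, ha⟩, h₂_act ⟨_, hb⟩ ⟨_, ha⟩, iha, ihb]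

end Closure

theorem stmt_2_general {X : Type*} (S : Set (FreeGroup X))
    (hind : Independent S) :
    IsFreeQuandleOn {g : FreeGroup X | SubquandleClosure S g} S := by
  set Q := {g : FreeGroup X | SubquandleClosure S g}
  refine ⟨fun s hs => .base hs, fun Q' _ f => ?_⟩
  choose s w hsw using fun g : Q => (subquandleClosure_iff S).1 g.2
  let h (g : Q) : Q' := (innerAction f (w g))⁻¹ (f (s g))
  have h_eq (g : Q) (t : S) (v : FreeGroup S) (hg : g.1 = lift Subtype.val (v⁻¹ * of t * v)) :
      h g = (innerAction f v)⁻¹ (f t) :=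
    innerAction_inv_apply_eq_of_conj_eq f (hind ((hsw g).symm.trans hg))
  have h_base (t : S) : h ⟨t, .base t.2⟩ = f t := (h_eq _ t 1 (by simp)).trans (by simp)
  have h_act (a b : Q) (hm : a.1 * b.1 * a.1⁻¹ ∈ Q) : h ⟨a.1 * b.1 * a.1⁻¹, hm⟩ = h a ◃ h b := by
    rw [h_eq _ (s b) (w b * ((w a)⁻¹ * of (s a) * w a)⁻¹) ?_, innerAction_inv_apply_of_conj]
    simp only [hsw a, hsw b, _root_.map_mul, _root_.map_inv]
    group
  refine ⟨h, ⟨h_base, h_act⟩, fun h' ⟨h'_base, h'_act⟩ =>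
    SubquandleClosure.hom_ext S (fun t ht => (h'_base ⟨t, ht⟩).trans (h_base ⟨t, ht⟩).symm)
      h'_act h_act⟩

/-- If `S ⊆ FQ X` is independent in `F(X)`, then the subquandle of `FQ X`
generated by `S` is a free quandle on `S`. -/
theorem stmt_2 {X : Type*} (S : Set (FreeGroup X)) (hS : S ⊆ FQ X)
    (hind : Independent S) :
    IsFreeQuandleOn {g : FreeGroup X | SubquandleClosure S g} S :=
  stmt_2_general S hind
end

section
/- Let Q be a subquandle of FQ(X). For each x ∈ X let P_x = {w ∈ F(X) : x^w ∈ Q and (w = 1 or the first letter of the reduced word w is not x^{±1})}, and T_x = {w ∈ P_x : for all q ∈ Q and ε ∈ {1,−1}, |w q^ε| > |w|}. Then the set S(Q) = ⋃_{x∈X} {x^w : w ∈ T_x} is contained in Q and generates Q as a quandle. -/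
/-!
Every `q ∈ Q` is `x^w` with `w` not starting with `x^{±1}`, and then `|q| = 2|w| + 1`.
If `w ∉ Tₓ`, some `q' ∈ Q` and `ε = ±1` give `u = w q'^ε` with `|u| ≤ |w|`. Cancellation
removes letters in pairs and `|q'|` is odd, so in fact `|u| < |w|`. Now
`q₁ = x^u = q'^{-ε} q q'^ε` lies in `Q`, and `q = q₁ ◁ q'` or `q₁ ▷ q'` according as
`ε = 1` or `-1`. Both `q₁` (`|q₁| ≤ 2|u| + 1`) and `q'` (`|q'| ≤ |w| + |u|`) are shorter
than `q`, so induction on `|q|` expresses `q` through `S(Q)`.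
-/

open FreeGroup

namespace FreeGroup

variable {X : Type*} [DecidableEq X]

lemma isReduced_invRev {L : List (X × Bool)} (h : IsReduced L) : IsReduced (invRev L) := by
  rw [isReduced_iff_reduce_eq, reduce_invRev, h.reduce_eq]

lemma isReduced_cons_toWord_of_firstLetterNe {w : FreeGroup X} {x : X} (h : FirstLetterNe w x)
    (b : Bool) : IsReduced ((x, b) :: w.toWord) := by
  rcases hw : w.toWord with _ | ⟨a, L⟩
  · exact .singleton
  · have hax : a.1 ≠ x := by simpa [FirstLetterNe, hw] using h
    exact isReduced_cons_cons.2 ⟨fun hxa => absurd hxa.symm hax, hw ▸ isReduced_toWord⟩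

lemma toWord_conj_of_firstLetterNe {w : FreeGroup X} {x : X} (h : FirstLetterNe w x) :
    (w⁻¹ * of x * w).toWord = invRev w.toWord ++ (x, true) :: w.toWord := by
  have hmk : w⁻¹ * of x * w = mk (invRev w.toWord ++ (x, true) :: w.toWord) := by
    conv_lhs => rw [← mk_toWord (x := w)]
    rw [inv_mk, show of x = mk [(x, true)] from rfl, mul_mk, mul_mk, List.append_assoc,
      List.singleton_append]
  rw [hmk, toWord_mk]
  refine IsReduced.reduce_eq ?_
  have hleft : IsReduced (invRev w.toWord ++ [(x, true)]) := by
    simpa [invRev] using isReduced_invRev (isReduced_cons_toWord_of_firstLetterNe h false)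
  simpa only [List.append_assoc, List.singleton_append] using
    hleft.append_overlap (L₃ := w.toWord) (isReduced_cons_toWord_of_firstLetterNe h true)
      (List.cons_ne_nil _ _)

lemma norm_conj_of_firstLetterNe {w : FreeGroup X} {x : X} (h : FirstLetterNe w x) :
    (w⁻¹ * of x * w).norm = 2 * w.norm + 1 := by
  simp only [norm, toWord_conj_of_firstLetterNe h, List.length_append, invRev_length,
    List.length_cons]
  ring

lemma exists_firstLetterNe_conj_mk_eq (x : X) :
    ∀ L : List (X × Bool), IsReduced L →
      ∃ v : FreeGroup X, FirstLetterNe v x ∧ v⁻¹ * of x * v = (mk L)⁻¹ * of x * mk L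
  | [], _ => ⟨1, by simp [FirstLetterNe], by simp [← one_eq_mk]⟩
  | (y, b) :: L, hL => by
    by_cases hyx : y = x
    · subst hyx
      obtain ⟨v, hv, hconj⟩ :=
        exists_firstLetterNe_conj_mk_eq y L (hL.infix ⟨[(y, b)], [], by simp⟩)
      refine ⟨v, hv, ?_⟩
      rw [hconj, ← List.singleton_append, ← mul_mk]
      cases b
      · rw [show mk [(y, false)] = (of y)⁻¹ from rfl]
        group
      · rw [show mk [(y, true)] = of y from rfl]
        group
    · refine ⟨mk ((y, b) :: L), ?_, rfl⟩
      simpa [FirstLetterNe, hL.reduce_eq] using hyx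

lemma exists_firstLetterNe_conj_eq (x : X) (w : FreeGroup X) :
    ∃ v : FreeGroup X, FirstLetterNe v x ∧ v⁻¹ * of x * v = w⁻¹ * of x * w := by
  simpa only [mk_toWord] using exists_firstLetterNe_conj_mk_eq x w.toWord isReduced_toWord

lemma norm_conj_le (u g : FreeGroup X) : (u⁻¹ * g * u).norm ≤ 2 * u.norm + g.norm := by
  have := norm_mul_le (u⁻¹ * g) u
  have := norm_mul_le u⁻¹ g
  rw [norm_inv_eq] at this
  omega

lemma exists_norm_add_norm_eq (a b : FreeGroup X) :
    ∃ n, a.norm + b.norm = (a * b).norm + 2 * n := by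
  simpa [norm, toWord_mul] using (reduce.red (L := a.toWord ++ b.toWord)).length

lemma norm_mul_lt_of_le_of_odd {a b : FreeGroup X} (hb : Odd b.norm)
    (h : (a * b).norm ≤ a.norm) : (a * b).norm < a.norm := by
  obtain ⟨n, hn⟩ := exists_norm_add_norm_eq a b
  obtain ⟨k, hk⟩ := hb
  omega

end FreeGroup

section Quandle

variable {G : Type*} [Group G]

lemma zpow_eq_or_eq_inv_of_mem {b : G} {ε : ℤ} (hε : ε ∈ ({1, -1} : Set ℤ)) :
    b ^ ε = b ∨ b ^ ε = b⁻¹ := by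
  rcases hε with rfl | rfl
  · exact .inl (zpow_one b)
  · exact .inr (zpow_neg_one b)

lemma IsSubquandle.conj_mem {Q : Set G} (hQ : IsSubquandle Q) {a b c : G} (ha : a ∈ Q)
    (hb : b ∈ Q) (hc : c = b ∨ c = b⁻¹) : c⁻¹ * a * c ∈ Q := by
  rcases hc with rfl | rfl
  · exact (hQ a ha c hb).1
  · simpa using (hQ a ha b hb).2

lemma SubquandleClosure.of_conj {S : Set G} {a b c : G} (hc : c = b ∨ c = b⁻¹)
    (ha : SubquandleClosure S (c⁻¹ * a * c)) (hb : SubquandleClosure S b) :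
    SubquandleClosure S a := by
  rcases hc with rfl | rfl
  · simpa [mul_assoc] using ha.conjInv hb
  · simpa [mul_assoc] using ha.conj hb

end Quandle

section FreeQuandle

open FreeGroup

variable {X : Type*} [DecidableEq X]

lemma exists_firstLetterNe_of_mem_FQ {q : FreeGroup X} (hq : q ∈ FQ X) :
    ∃ (x : X) (w : FreeGroup X), FirstLetterNe w x ∧ q = w⁻¹ * of x * w := by
  obtain ⟨x, w, rfl⟩ := hq
  obtain ⟨v, hv, hconj⟩ := exists_firstLetterNe_conj_eq x w
  exact ⟨x, v, hv, hconj.symm⟩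

lemma odd_norm_of_mem_FQ {q : FreeGroup X} (hq : q ∈ FQ X) : Odd q.norm := by
  obtain ⟨x, w, hw, rfl⟩ := exists_firstLetterNe_of_mem_FQ hq
  exact ⟨w.norm, norm_conj_of_firstLetterNe hw⟩

lemma SQbasis_subset (Q : Set (FreeGroup X)) : SQbasis Q ⊆ Q := by
  rintro _ ⟨_, ⟨x, rfl⟩, w, hw, rfl⟩
  exact hw.1.1

lemma subquandleClosure_SQbasis {Q : Set (FreeGroup X)} (hQ : Q ⊆ FQ X) (hsub : IsSubquandle Q)
    {q : FreeGroup X} (hq : q ∈ Q) : SubquandleClosure (SQbasis Q) q := by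
  induction hn : q.norm using Nat.strong_induction_on generalizing q with
  | _ n ih =>
    obtain ⟨x, w, hw, rfl⟩ := exists_firstLetterNe_of_mem_FQ (hQ hq)
    rw [norm_conj_of_firstLetterNe hw] at hn
    by_cases hT : w ∈ Tx Q x
    · exact .base (Set.mem_iUnion.2 ⟨x, w, hT, rfl⟩)
    obtain ⟨q', hq', ε, hε, hle⟩ :
        ∃ q' ∈ Q, ∃ ε ∈ ({1, -1} : Set ℤ), (w * q' ^ ε).norm ≤ w.norm := by
      simp only [Tx, Set.mem_sep_iff, not_and, not_forall, gt_iff_lt, not_lt, exists_prop] at hT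
      exact hT ⟨hq, .inr hw⟩
    set c := q' ^ ε
    have hc : c = q' ∨ c = q'⁻¹ := zpow_eq_or_eq_inv_of_mem hε
    have hcn : c.norm = q'.norm := by rcases hc with h | h <;> simp [h]
    set u := w * c
    have hu : u.norm < w.norm := norm_mul_lt_of_le_of_odd (hcn ▸ odd_norm_of_mem_FQ (hQ hq')) hle
    have hq'n : q'.norm < n := by
      have : q'.norm ≤ w.norm + u.norm := by simpa [u, ← hcn] using norm_mul_le w⁻¹ u
      omega
    have hq₁ : c⁻¹ * (w⁻¹ * of x * w) * c = u⁻¹ * of x * u := by simp only [u]; group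
    have hq₁n : (u⁻¹ * of x * u).norm < n := by
      have := norm_conj_le u (of x)
      rw [norm_of] at this
      omega
    refine .of_conj hc ?_ (ih _ hq'n hq' rfl)
    rw [hq₁]
    exact ih _ hq₁n (hq₁ ▸ hsub.conj_mem hq hq' hc) rfl

end FreeQuandle

/-- For a subquandle `Q` of `FQ X`, the set `S(Q) = ⋃ₓ x^{Tₓ}` is contained in `Q`
and generates `Q` as a quandle. -/
theorem stmt_4 {X : Type*} [DecidableEq X] (Q : Set (FreeGroup X))
    (hQ : Q ⊆ FQ X) (hsub : IsSubquandle Q) :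
    SQbasis Q ⊆ Q ∧ ∀ q ∈ Q, SubquandleClosure (SQbasis Q) q :=
  ⟨SQbasis_subset Q, fun _ hq => subquandleClosure_SQbasis hQ hsub hq⟩
end

section
/- Let Q be a subquandle of FQ(X) and define S(Q) = ⋃_{x∈X} {x^w : w ∈ T_x}, where T_x = {w ∈ P_x : ∀ q ∈ Q, ∀ ε ∈ {±1}, |w q^ε| > |w|} and P_x = {w : x^w ∈ Q and (w = 1 or w₁ ≠ x^{±1})}. Then S(Q) is an independent subset of the free group F(X), i.e., S(Q) is a basis of a free subgroup. -/
open FreeGroup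

/-!
Write each element of `S(Q)` as `w⁻¹ x w` with `w ∈ Tₓ`; since `w` does not start with `x^{±1}`,
its reduced word is literally `w⁻¹ · x · w`. By induction along a reduced word over `S(Q)`, the
reduced word of its image in `F(X)` ends with the whole core `x^{±1} w` of its last letter.
Appending a letter `v⁻¹ y^{±1} v`, the cancellation cannot reach `y^{±1}`: otherwise one of the
cores `x^{±1} w` and `y^{∓1} v` is a suffix of the other. Equal cores mean two mutually inverse
adjacent letters; a proper suffix, say `w = u y^{∓1} v`, gives `|w q^{±1}| = |u v| < |w|` for
`q = v⁻¹ y v ∈ Q`, against `w ∈ Tₓ`. So a nontrivial word never maps to `1`.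
-/

namespace FreeGroup

variable {α : Type*}

theorem inv_mk_singleton (a : α) (b : Bool) : (mk [(a, b)])⁻¹ = mk [(a, !b)] := by
  simp [inv_mk, invRev]

theorem lift_mk_singleton {G : Type*} [Group G] (f : α → G) (a : α) (b : Bool) :
    lift f (mk [(a, b)]) = cond b (f a) (f a)⁻¹ := by
  simp [lift_mk]

theorem exists_zpow_conj_of_eq (v : FreeGroup α) (a : α) (b : Bool) :
    ∃ ε ∈ ({1, -1} : Set ℤ), (v⁻¹ * of a * v) ^ ε = v⁻¹ * mk [(a, b)] * v := by
  cases b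
  · refine ⟨-1, by simp, ?_⟩
    rw [zpow_neg_one, show mk [(a, false)] = (of a)⁻¹ from (inv_mk_singleton a true).symm]
    group
  · exact ⟨1, by simp, by rw [zpow_one]; rfl⟩

theorem lift_mk_singleton_of_eq_conj {β : Type*} {f : α → FreeGroup β} {a : α} {x : β}
    {w : FreeGroup β} (h : f a = w⁻¹ * of x * w) (b : Bool) :
    lift f (mk [(a, b)]) = w⁻¹ * mk [(x, b)] * w := by
  rw [lift_mk_singleton, h]
  cases b
  · rw [show mk [(x, false)] = (of x)⁻¹ from (inv_mk_singleton x true).symm]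
    show (w⁻¹ * of x * w)⁻¹ = _
    group
  · rfl

variable [DecidableEq α]

theorem exists_reduce_append_eq :
    ∀ {L₁ L₂ : List (α × Bool)}, IsReduced L₁ → IsReduced L₂ →
      ∃ a b m, L₁ = a ++ m ∧ L₂ = invRev m ++ b ∧ reduce (L₁ ++ L₂) = a ++ b := by
  intro L₁ L₂ h₁ h₂
  induction L₂ generalizing L₁ with
  | nil => exact ⟨L₁, [], [], by simp, rfl, by simpa using h₁.reduce_eq⟩
  | cons p L₂ ih =>
    rcases List.eq_nil_or_concat' L₁ with rfl | ⟨L₁, q, rfl⟩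
    · exact ⟨[], p :: L₂, [], rfl, rfl, h₂.reduce_eq⟩
    by_cases hq : q = (p.1, !p.2)
    · subst hq
      obtain ⟨a, b, m, rfl, rfl, hr⟩ :=
        ih (h₁.infix (List.prefix_append _ _).isInfix) (h₂.infix (List.suffix_cons _ _).isInfix)
      refine ⟨a, b, m ++ [(p.1, !p.2)], by simp, by simp [invRev], ?_⟩
      have hstep : Red.Step (a ++ m ++ (p.1, !p.2) :: (p.1, !!p.2) :: (invRev m ++ b))
          (a ++ m ++ (invRev m ++ b)) := Red.Step.not
      rw [Bool.not_not] at hstep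
      rw [← hr]
      simpa using reduce.Step.eq hstep
    · refine ⟨L₁ ++ [q], p :: L₂, [], by simp, by simp, IsReduced.reduce_eq ?_⟩
      refine List.isChain_append.2 ⟨h₁, h₂, ?_⟩
      simp only [List.getLast?_concat, Option.mem_def, Option.some.injEq, List.head?_cons]
      rintro _ rfl _ rfl hqp
      by_contra hqp'
      exact hq (Prod.ext hqp (Bool.eq_not.2 hqp'))

theorem exists_toWord_mul_eq (g h : FreeGroup α) :
    ∃ a b m, g.toWord = a ++ m ∧ h⁻¹.toWord = b ++ m ∧ (g * h).toWord = a ++ invRev b := by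
  obtain ⟨a, b, m, hg, hh, hgh⟩ := exists_reduce_append_eq (isReduced_toWord (x := g))
    (isReduced_toWord (x := h))
  exact ⟨a, invRev b, m, hg, by rw [toWord_inv, hh, invRev_append, invRev_invRev],
    by rw [toWord_mul, hgh, invRev_invRev]⟩

end FreeGroup

section

variable {X : Type*} [DecidableEq X]

theorem firstLetterNe_of_mem_Px {Q : Set (FreeGroup X)} {x : X} {w : FreeGroup X}
    (hw : w ∈ Px Q x) : FirstLetterNe w x := by
  rcases hw.2 with rfl | h
  · simp [FirstLetterNe]
  · exact h

theorem isReduced_cons_toWord {w : FreeGroup X} {x : X} (hw : FirstLetterNe w x) (e : Bool) :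
    IsReduced ((x, e) :: w.toWord) := by
  cases hW : w.toWord with
  | nil => exact IsReduced.singleton
  | cons p W =>
    have hp : p.1 ≠ x := fun h => hw (by simp [hW, h])
    exact isReduced_cons_cons.2 ⟨fun h => absurd h.symm hp, hW ▸ isReduced_toWord⟩

theorem toWord_conj_mk_singleton {w : FreeGroup X} {x : X} (hw : FirstLetterNe w x) (e : Bool) :
    (w⁻¹ * mk [(x, e)] * w).toWord = invRev w.toWord ++ (x, e) :: w.toWord := by
  have hleft : IsReduced (invRev w.toWord ++ [(x, e)]) := by
    have h : invRev ((x, !e) :: w.toWord) = invRev w.toWord ++ [(x, e)] := by simp [invRev]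
    rw [← h, isReduced_iff_reduce_eq, reduce_invRev, (isReduced_cons_toWord hw (!e)).reduce_eq]
  have hred : IsReduced (invRev w.toWord ++ [(x, e)] ++ w.toWord) :=
    hleft.append_overlap (isReduced_cons_toWord hw e) (List.cons_ne_nil _ _)
  rw [← mk_toWord (x := w), inv_mk, mul_mk, mul_mk, toWord_mk, toWord_mk, hred.reduce_eq]
  simp

theorem Tx.not_cons_suffix {Q : Set (FreeGroup X)} {x y : X} {w v : FreeGroup X}
    (hw : w ∈ Tx Q x) (hv : v⁻¹ * of y * v ∈ Q) (b : Bool) :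
    ¬(y, b) :: v.toWord <:+ w.toWord := by
  rintro ⟨u, hu⟩
  obtain ⟨ε, hε, hpow⟩ := exists_zpow_conj_of_eq v y (!b)
  have hshort : w * (v⁻¹ * of y * v) ^ ε = mk u * v := by
    rw [hpow, ← inv_mk_singleton, ← mk_toWord (x := w), ← hu, ← List.singleton_append,
      ← mul_mk, ← mul_mk, mk_toWord]
    group
  have hlen : w.norm = u.length + 1 + v.norm := by
    simp only [FreeGroup.norm, ← hu, List.length_append, List.length_cons]
    omega
  have hlonger := hw.2 _ hv ε hε
  rw [hshort] at hlonger
  have hle : (mk u * v).norm ≤ u.length + v.norm :=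
    (norm_mul_le (mk u) v).trans (Nat.add_le_add_right norm_mk_le _)
  omega

theorem Tx.eq_of_cons_suffix {Q : Set (FreeGroup X)} {x y : X} {w v : FreeGroup X} {b e : Bool}
    (hw : w ∈ Tx Q x) (hv : v⁻¹ * of y * v ∈ Q) (h : (y, b) :: v.toWord <:+ (x, e) :: w.toWord) :
    y = x ∧ b = e ∧ v = w := by
  rcases List.suffix_cons_iff.1 h with h | h
  · simp only [List.cons.injEq, Prod.mk.injEq, toWord_inj] at h
    exact ⟨h.1.1, h.1.2, h.2⟩
  · exact absurd h (Tx.not_cons_suffix hw hv b)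

theorem exists_toWord_mul_conj_eq {Q : Set (FreeGroup X)} {x y : X} {w v P : FreeGroup X}
    {e f : Bool} {A : List (X × Bool)} (hw : w ∈ Tx Q x) (hv : v ∈ Tx Q y)
    (hP : P.toWord = A ++ (x, e) :: w.toWord)
    (hne : ¬(w⁻¹ * of x * w = v⁻¹ * of y * v ∧ e = !f)) :
    ∃ A', (P * (v⁻¹ * mk [(y, f)] * v)).toWord = A' ++ (y, f) :: v.toWord := by
  obtain ⟨a, b, m, hPm, hinv, hmul⟩ := exists_toWord_mul_eq P (v⁻¹ * mk [(y, f)] * v)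
  have hinv' : (v⁻¹ * mk [(y, f)] * v)⁻¹.toWord = invRev v.toWord ++ (y, !f) :: v.toWord := by
    rw [← toWord_conj_mk_singleton (firstLetterNe_of_mem_Px hv.1), ← inv_mk_singleton]
    congr 1
    group
  have hcore : ¬(y, !f) :: v.toWord <:+ m := by
    intro hm
    have hv' : (y, !f) :: v.toWord <:+ P.toWord := hm.trans (hPm ▸ List.suffix_append a m)
    have hw' : (x, e) :: w.toWord <:+ P.toWord := hP ▸ List.suffix_append _ _
    obtain ⟨rfl, hfe, rfl⟩ : y = x ∧ (!f) = e ∧ v = w := by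
      rcases List.suffix_or_suffix_of_suffix hv' hw' with h | h
      · exact Tx.eq_of_cons_suffix hw hv.1.1 h
      · obtain ⟨rfl, hef, rfl⟩ := Tx.eq_of_cons_suffix hv hw.1.1 h
        exact ⟨rfl, hef.symm, rfl⟩
    exact hne ⟨rfl, hfe.symm⟩
  obtain ⟨t, ht⟩ : m <:+ v.toWord := by
    rcases List.suffix_or_suffix_of_suffix (hinv ▸ List.suffix_append b m)
      (hinv' ▸ List.suffix_append _ _) with h | h
    · exact (List.suffix_cons_iff.1 h).resolve_left fun h' => hcore (h' ▸ List.suffix_refl _)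
    · exact absurd h hcore
  have hb : b = invRev v.toWord ++ (y, !f) :: t :=
    List.append_cancel_right (hinv.symm.trans (by rw [hinv', ← ht]; simp))
  exact ⟨a ++ invRev t, by
    rw [hmul, hb, invRev_append, invRev_invRev, invRev_cons]
    simp [invRev]⟩

theorem exists_core_of_mem_SQbasis {Q : Set (FreeGroup X)} {s : FreeGroup X}
    (hs : s ∈ SQbasis Q) : ∃ x, ∃ w ∈ Tx Q x, s = w⁻¹ * of x * w := by
  simpa [SQbasis] using hs

theorem exists_toWord_lift_eq {Q : Set (FreeGroup X)} (L : List (SQbasis Q × Bool))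
    (s : SQbasis Q) (e : Bool) (hL : IsReduced (L ++ [(s, e)])) {x : X} {w : FreeGroup X}
    (hw : w ∈ Tx Q x) (hs : (s : FreeGroup X) = w⁻¹ * of x * w) :
    ∃ A, (lift Subtype.val (mk (L ++ [(s, e)]))).toWord = A ++ (x, e) :: w.toWord := by
  induction L using List.reverseRecOn generalizing s e x w with
  | nil =>
    exact ⟨invRev w.toWord, by rw [List.nil_append, lift_mk_singleton_of_eq_conj hs,
      toWord_conj_mk_singleton (firstLetterNe_of_mem_Px hw.1)]⟩
  | append_singleton L p ih =>
    obtain ⟨t, f⟩ := p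
    obtain ⟨y, v, hv, ht⟩ := exists_core_of_mem_SQbasis t.2
    obtain ⟨A, hA⟩ := ih t f (hL.infix (List.prefix_append _ _).isInfix) hv ht
    have hne : ¬(v⁻¹ * of y * v = w⁻¹ * of x * w ∧ f = !e) := by
      rintro ⟨hts, rfl⟩
      have hjunction := (List.isChain_append.1 hL).2.2 (t, !e) (by simp) (s, e) rfl
      simp [Subtype.ext (ht.trans (hts.trans hs.symm))] at hjunction
    rw [← mul_mk, _root_.map_mul, lift_mk_singleton_of_eq_conj hs]
    exact exists_toWord_mul_conj_eq hv hw hA hne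

end

theorem stmt_5_general {X : Type*} [DecidableEq X] (Q : Set (FreeGroup X)) :
    Independent (SQbasis Q) := by
  refine (injective_iff_map_eq_one _).2 fun g hg => ?_
  by_contra hg1
  obtain ⟨L, ⟨s, e⟩, hL⟩ :=
    (List.eq_nil_or_concat' g.toWord).resolve_left (by rwa [toWord_eq_nil_iff])
  obtain ⟨x, w, hw, hs⟩ := exists_core_of_mem_SQbasis s.2
  obtain ⟨A, hA⟩ := exists_toWord_lift_eq L s e (hL ▸ isReduced_toWord) hw hs
  rw [← hL, mk_toWord, hg, toWord_one] at hA
  simp at hA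

/-- For a subquandle `Q` of `FQ X`, the set `S(Q)` is independent in `F(X)`,
i.e. it is a basis of a free subgroup. -/
theorem stmt_5 {X : Type*} [DecidableEq X] (Q : Set (FreeGroup X))
    (hQ : Q ⊆ FQ X) (hsub : IsSubquandle Q) :
    Independent (SQbasis Q) :=
  stmt_5_general Q
end

section
/- (M. Hall's significant factors criterion) Let Y ⊆ F(X) with Y ∩ Y⁻¹ = ∅. Suppose there is an assignment of an index 1 ≤ i(w) ≤ |w| to each w ∈ Y ∪ Y⁻¹ with i(w⁻¹) = |w| + 1 − i(w), such that for all w, v ∈ Y ∪ Y⁻¹ with w ≠ v⁻¹, the cancellation in the reduced product wv does not reach the letters in positions i(w) of w and i(v) of v. Then Y is independent, i.e., Y freely generates a free subgroup of F(X). -/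
open FreeGroup

/-! Write a nontrivial element of `⟨Y⟩` as a product `u₁ ⋯ uₙ` of a reduced word over `Y`; its
factors lie in `Y ∪ Y⁻¹` and, because the word is reduced and `Y ∩ Y⁻¹ = ∅`, no two consecutive
factors are mutually inverse. By induction on `m`, the reduced word of `u₁ ⋯ uₘ` ends with the
letters of `uₘ` from position `i(uₘ)` on. Indeed, multiplying by `v = uₘ₊₁` only cancels letters
of `w = uₘ` that lie strictly after position `i(w)`, so the cancellation is the same as in `w v`
and it stops inside `v` before position `i(v)`. Hence the reduced word of the product is
nonempty. -/

open List

section CancelBound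

variable {α : Type*} [DecidableEq α] {w v : FreeGroup α} {k : ℕ}

theorem FreeGroup.mk_take_mul_mk_drop (x : FreeGroup α) (n : ℕ) :
    mk (x.toWord.take n) * mk (x.toWord.drop n) = x := by
  rw [mul_mk, take_append_drop, mk_toWord]

theorem CancelBound.mk_drop_mul_mk_take (hk : CancelBound w v k) :
    mk (w.toWord.drop (w.toWord.length - k)) * mk (v.toWord.take k) = 1 := by
  have hwv : w * v = mk (w.toWord.take (w.toWord.length - k)) * mk (v.toWord.drop k) := by
    rw [mul_mk, ← show (w * v).toWord = _ from hk, mk_toWord]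
  conv_lhs at hwv => rw [← mk_take_mul_mk_drop w (w.toWord.length - k), ← mk_take_mul_mk_drop v k]
  rwa [mul_assoc, mul_left_cancel_iff, ← mul_assoc, mul_eq_right] at hwv

theorem CancelBound.drop_suffix_toWord_mul (hk : CancelBound w v k) {p : FreeGroup α} {d : ℕ}
    (hp : w.toWord.drop d <:+ p.toWord) (hdk : d + k < w.toWord.length) :
    v.toWord.drop k <:+ (p * v).toWord := by
  obtain ⟨L, hL⟩ := hp
  set A := w.toWord.take (w.toWord.length - k)
  set C := w.toWord.drop (w.toWord.length - k)
  set T := A.drop d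
  have hT : T ≠ [] := by
    simp only [T, A, ne_eq, drop_eq_nil_iff, length_take]; omega
  have hdrop : w.toWord.drop d = T ++ C := by
    rw [← drop_append_of_le_length (by simp [A]; omega), take_append_drop]
  have hpv : p * v = mk (L ++ T ++ v.toWord.drop k) := by
    have hp : p = mk (L ++ T) * mk C := by rw [mul_mk, append_assoc, ← hdrop, hL, mk_toWord]
    conv_lhs => rw [hp, ← mk_take_mul_mk_drop v k]
    rw [mul_assoc (mk (L ++ T)), ← mul_assoc (mk C),
      hk.mk_drop_mul_mk_take, one_mul, mul_mk]
  have hLT : IsReduced (L ++ T) := by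
    have := isReduced_toWord (x := p)
    rw [← hL, hdrop] at this
    exact this.infix ⟨[], C, by simp⟩
  have hTv : IsReduced (T ++ v.toWord.drop k) := by
    have := isReduced_toWord (x := w * v)
    rw [show (w * v).toWord = _ from hk] at this
    exact this.infix ⟨A.take d, [], by rw [← append_assoc, take_append_drop, append_nil]⟩
  rw [hpv, toWord_mk, (hLT.append_overlap hTv hT).reduce_eq]
  exact suffix_append _ _

end CancelBound

section SignificantFactors

variable {α : Type*} [DecidableEq α] {S : Set (FreeGroup α)} {i : FreeGroup α → ℕ}

def HasSignificantLetters (S : Set (FreeGroup α)) (i : FreeGroup α → ℕ) : Prop :=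
  ∀ w ∈ S, ∀ v ∈ S, w ≠ v⁻¹ → ∃ k : ℕ, CancelBound w v k ∧ k + i w ≤ w.norm ∧ k < i v

theorem drop_suffix_toWord_prod_mul (hi : ∀ w ∈ S, 1 ≤ i w)
    (hsig : HasSignificantLetters S i)
    (l : List (FreeGroup α)) (v : FreeGroup α) (hS : ∀ a ∈ l ++ [v], a ∈ S)
    (hl : (l ++ [v]).IsChain (fun a b => a ≠ b⁻¹)) :
    v.toWord.drop (i v - 1) <:+ (l.prod * v).toWord := by
  induction l using List.reverseRecOn generalizing v with
  | nil => simpa using drop_suffix (i v - 1) v.toWord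
  | append_singleton l w ih =>
    rw [append_assoc, singleton_append, isChain_append_cons_cons] at hl
    obtain ⟨hlw, hwv, -⟩ := hl
    have hw : w ∈ S := hS w (by simp)
    have hv : v ∈ S := hS v (by simp)
    obtain ⟨k, hk, hkw, hkv⟩ := hsig w hw v hv hwv
    have hdk : i w - 1 + k < w.toWord.length := by
      have := hi w hw
      unfold FreeGroup.norm at hkw
      omega
    have hsuff : v.toWord.drop k <:+ ((l ++ [w]).prod * v).toWord := by
      refine hk.drop_suffix_toWord_mul ?_ hdk
      rw [prod_append, prod_singleton]
      exact ih w (fun a ha => hS a (mem_append_left [v] ha)) hlw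
    refine IsSuffix.trans ?_ hsuff
    rw [show i v - 1 = k + (i v - 1 - k) by omega, ← drop_drop]
    exact drop_suffix _ _

theorem prod_ne_one_of_isChain (hi : ∀ w ∈ S, 1 ≤ i w ∧ i w ≤ w.norm)
    (hsig : HasSignificantLetters S i)
    {l : List (FreeGroup α)} (hS : ∀ a ∈ l, a ∈ S) (hl : l.IsChain (fun a b => a ≠ b⁻¹))
    (hne : l ≠ []) : l.prod ≠ 1 := by
  obtain ⟨l, v, rfl⟩ := (eq_nil_or_concat l).resolve_left hne
  rw [concat_eq_append] at hS hl ⊢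
  have hv := hi v (hS v (by simp))
  have hsuff := drop_suffix_toWord_prod_mul (fun w hw => (hi w hw).1) hsig l v hS hl
  rw [prod_append, prod_singleton]
  intro h1
  rw [h1, toWord_one] at hsuff
  have := hsuff.length_le
  simp only [length_drop, length_nil] at this
  unfold FreeGroup.norm at hv
  omega

end SignificantFactors

theorem isChain_ne_inv_map_of_isReduced {G : Type*} [Group G] {Y : Set G}
    (hY : Y ∩ Y⁻¹ = ∅) {L : List (Y × Bool)} (hL : IsReduced L) :
    (L.map fun x => cond x.2 (x.1 : G) (x.1 : G)⁻¹).IsChain (fun a b => a ≠ b⁻¹) := by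
  rw [isChain_map]
  refine hL.imp ?_
  rintro ⟨y, b⟩ ⟨z, c⟩ hyz heq
  have hY' : ∀ g ∈ Y, g⁻¹ ∉ Y := fun g hg hg' =>
    (Set.eq_empty_iff_forall_notMem.mp hY) g ⟨hg, by simpa using hg'⟩
  cases b <;> cases c <;> simp only [cond_true, cond_false, inv_inv, inv_inj] at heq
  · exact hY' z z.2 (by rw [← heq, inv_inv]; exact y.2)
  · simpa using hyz (Subtype.ext heq)
  · simpa using hyz (Subtype.ext heq)
  · exact hY' y y.2 (by rw [heq, inv_inv]; exact z.2)

/-- M. Hall's significant factors criterion: if `Y ∩ Y⁻¹ = ∅` and each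
`w ∈ Y ∪ Y⁻¹` has a significant factor at position `i w` (with `1 ≤ i w ≤ |w|`
and `i w⁻¹ = |w| + 1 - i w`) which is never reached by the cancellation in any
product `w * v` with `w, v ∈ Y ∪ Y⁻¹`, `w ≠ v⁻¹`, then `Y` is independent. -/
theorem stmt_7 {X : Type*} [DecidableEq X] (Y : Set (FreeGroup X))
    (hY : Y ∩ Y⁻¹ = ∅) (i : FreeGroup X → ℕ)
    (hi : ∀ w ∈ Y ∪ Y⁻¹, 1 ≤ i w ∧ i w ≤ w.norm ∧ i w⁻¹ = w.norm + 1 - i w)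
    (hsig : ∀ w ∈ Y ∪ Y⁻¹, ∀ v ∈ Y ∪ Y⁻¹, w ≠ v⁻¹ →
      ∃ k : ℕ, CancelBound w v k ∧ k + i w ≤ w.norm ∧ k < i v) :
    Independent Y := by
  refine (injective_iff_map_eq_one _).mpr fun g hg => ?_
  by_contra hg1
  rw [← mk_toWord (x := g), lift_mk] at hg
  refine prod_ne_one_of_isChain (fun w hw => ⟨(hi w hw).1, (hi w hw).2.1⟩) hsig ?_
    (isChain_ne_inv_map_of_isReduced hY isReduced_toWord) (by simpa using hg1) hg
  simp only [mem_map, Prod.exists, forall_exists_index, and_imp]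
  rintro _ y (_ | _) - rfl
  · exact Or.inr (by simp)
  · exact Or.inl y.2
end

section
/- Let G be a group and S ⊆ G a subset that freely generates a free subgroup of G, with S contained in a union of conjugacy classes C ⊆ G closed under conjugation. Then the subquandle of Conj(G) generated by S is isomorphic as a quandle to the free quandle FQ(S). -/
open FreeGroup

/-
The homomorphism `φ : F(S) → G` induced by the inclusion is injective, so it suffices to see that
it maps `FQ(S)` onto the subquandle generated by `S`; being a group homomorphism, it then
automatically respects the conjugation operations. Conjugating by an element of `⟨S⟩` preserves
the subquandle generated by `S`, and `φ(w⁻¹ s w) = φ(w)⁻¹ s φ(w)` with `φ(w) ∈ ⟨S⟩`, which gives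
one inclusion; the other holds because `FQ(S)` contains `S` and is closed under conjugation.
-/

section

variable {G : Type*} [Group G] (S : Set G)

theorem subquandleClosure_conj_iff {g : G} (hg : g ∈ Subgroup.closure S) (a : G) :
    SubquandleClosure S (g⁻¹ * a * g) ↔ SubquandleClosure S a := by
  induction hg using Subgroup.closure_induction generalizing a with
  | mem s hs =>
    refine ⟨fun h => ?_, fun h => .conj h (.base hs)⟩
    simpa [mul_assoc] using SubquandleClosure.conjInv h (.base hs)
  | one => simp
  | mul x y _ _ ihx ihy =>
    rw [show (x * y)⁻¹ * a * (x * y) = y⁻¹ * (x⁻¹ * a * x) * y by group, ihy, ihx]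
  | inv x _ ihx =>
    rw [← ihx, inv_inv]
    simp [mul_assoc]

theorem image_lift_FQ :
    FreeGroup.lift (Subtype.val : S → G) '' FQ S = {g | SubquandleClosure S g} := by
  apply Set.Subset.antisymm
  · rintro _ ⟨_, ⟨x, w, rfl⟩, rfl⟩
    have hw : FreeGroup.lift (Subtype.val : S → G) w ∈ Subgroup.closure S := by
      rw [FreeGroup.closure_eq_range]
      exact ⟨w, rfl⟩
    simpa using (subquandleClosure_conj_iff S hw x).mpr (.base x.2)
  · intro g hg
    induction hg with
    | base h => exact ⟨FreeGroup.of ⟨_, h⟩, ⟨⟨_, h⟩, 1, by group⟩, by simp⟩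
    | conj _ _ iha ihb =>
      obtain ⟨_, ⟨x, w, rfl⟩, hu⟩ := iha
      obtain ⟨v, _, hv⟩ := ihb
      exact ⟨v⁻¹ * (w⁻¹ * FreeGroup.of x * w) * v, ⟨x, w * v, by group⟩, by simp [hu, hv]⟩
    | conjInv _ _ iha ihb =>
      obtain ⟨_, ⟨x, w, rfl⟩, hu⟩ := iha
      obtain ⟨v, _, hv⟩ := ihb
      exact ⟨v * (w⁻¹ * FreeGroup.of x * w) * v⁻¹, ⟨x, w * v⁻¹, by group⟩, by simp [hu, hv]⟩

end

theorem stmt_13_general {G : Type*} [Group G] (S : Set G) (hind : Independent S) :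
    ∃ e : {g : G // SubquandleClosure S g} ≃ (FQ (↥S) : Set (FreeGroup ↥S)),
      ∀ (a b : {g : G // SubquandleClosure S g})
        (hm : (a : G) * (b : G) * (a : G)⁻¹ ∈ {g : G | SubquandleClosure S g})
        (hm' : (e a : FreeGroup ↥S) * (e b : FreeGroup ↥S) * (e a : FreeGroup ↥S)⁻¹ ∈
          FQ (↥S)),
        e ⟨(a : G) * (b : G) * (a : G)⁻¹, hm⟩ =
          ⟨(e a : FreeGroup ↥S) * (e b : FreeGroup ↥S) * (e a : FreeGroup ↥S)⁻¹, hm'⟩ := by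
  set φ := FreeGroup.lift (Subtype.val : S → G)
  have hbij : Set.BijOn φ (FQ S) {g | SubquandleClosure S g} :=
    image_lift_FQ S ▸ hind.injOn.bijOn_image
  refine ⟨(hbij.equiv φ).symm, fun a b hm hm' => ?_⟩
  have hφ (z : {g : G // SubquandleClosure S g}) : φ ((hbij.equiv φ).symm z) = z :=
    congrArg Subtype.val ((hbij.equiv φ).apply_symm_apply z)
  rw [Equiv.symm_apply_eq]
  ext
  change _ = φ (_ * _ * _)
  rw [_root_.map_mul, _root_.map_mul, _root_.map_inv, hφ, hφ]

/-- If `S ⊆ G` freely generates a free subgroup and lies in a union of conjugacy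
classes `C` closed under conjugation, then the subquandle of `Conj G` generated by
`S` is isomorphic as a quandle to the free quandle `FQ S`. -/
theorem stmt_13 {G : Type*} [Group G] (S : Set G) (hind : Independent S)
    (C : Set G) (hSC : S ⊆ C) (hC : ∀ g ∈ C, ∀ h : G, h⁻¹ * g * h ∈ C) :
    ∃ e : {g : G // SubquandleClosure S g} ≃ (FQ (↥S) : Set (FreeGroup ↥S)),
      ∀ (a b : {g : G // SubquandleClosure S g})
        (hm : (a : G) * (b : G) * (a : G)⁻¹ ∈ {g : G | SubquandleClosure S g})
        (hm' : (e a : FreeGroup ↥S) * (e b : FreeGroup ↥S) * (e a : FreeGroup ↥S)⁻¹ ∈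
          FQ (↥S)),
        e ⟨(a : G) * (b : G) * (a : G)⁻¹, hm⟩ =
          ⟨(e a : FreeGroup ↥S) * (e b : FreeGroup ↥S) * (e a : FreeGroup ↥S)⁻¹, hm'⟩ :=
  stmt_13_general S hind
end
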